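/- The identity 2Ĝ = μ ∘ Δ̂ holds as linear maps F̂ → F̂. -/

import Mathlib

open scoped TensorProduct

/-- cd-monomials: `false` is the letter `c`, `true` is the letter `d`. -/
abbrev Mon := List Bool

/-- The polynomial algebra `F = ℚ⟨c,d⟩`. -/
abbrev F := MonoidAlgebra ℚ (FreeMonoid Bool)

noncomputable def mono (w : Mon) : F := MonoidAlgebra.single (FreeMonoid.ofList w) 1

noncomputable def cF : F := mono [false]
noncomputable def dF : F := mono [true]

noncomputable def gLetter : Bool → F
  | false => dF
  | true  => cF * dF

noncomputable def gMon : Mon → F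
  | [] => 0
  | a :: t => gLetter a * mono t + mono [a] * gMon t

/-- The derivation `G` with `G c = d`, `G d = cd`. -/
noncomputable def G : F →ₗ[ℚ] F :=
  (Finsupp.lsum ℚ fun w => LinearMap.toSpanSingleton ℚ F (gMon (FreeMonoid.toList w)))
    ∘ₗ (MonoidAlgebra.coeffLinearEquiv ℚ : F ≃ₗ[ℚ] (FreeMonoid Bool →₀ ℚ)).toLinearMap

/-- `Psi n` is the cd-index of the Boolean lattice of rank `n+1`. -/
noncomputable def Psi : ℕ → F
  | 0 => 1
  | n+1 => Psi n * cF + G (Psi n)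

/-- degree of a cd-monomial (`c` has degree 1, `d` degree 2). -/
def deg (w : Mon) : ℕ := w.length + w.count true

/-- `beta v` : coefficient of `v` in the cd-index of the Boolean lattice of rank `deg v + 1`. -/
noncomputable def beta (w : Mon) : ℚ := (Psi (deg w)).coeff (FreeMonoid.ofList w)
/-- `F̂ = ℚ·e ⊕ F`, with basis indexed by `Option Mon`; `none` is the element `e`. -/
abbrev Fhat := Option Mon →₀ ℚ

noncomputable def ehat : Fhat := Finsupp.single none 1

/-- the inclusion `F → F̂`. -/
noncomputable def ι : F →ₗ[ℚ] Fhat :=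
  (Finsupp.lsum ℚ fun w =>
    LinearMap.toSpanSingleton ℚ Fhat (Finsupp.single (some (FreeMonoid.toList w)) 1))
    ∘ₗ (MonoidAlgebra.coeffLinearEquiv ℚ : F ≃ₗ[ℚ] (FreeMonoid Bool →₀ ℚ)).toLinearMap

noncomputable def deltaLetter : Bool → F ⊗[ℚ] F
  | false => (2 : ℚ) • ((1 : F) ⊗ₜ (1 : F))
  | true  => (1 : F) ⊗ₜ cF + cF ⊗ₜ (1 : F)

/-- `Δ` on monomials, via `Δ(uv) = Δ(u)v + uΔ(v)`. -/
noncomputable def deltaMon : Mon → F ⊗[ℚ] F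
  | [] => 0
  | a :: t =>
      TensorProduct.map LinearMap.id (LinearMap.mulRight ℚ (mono t)) (deltaLetter a)
        + TensorProduct.map (LinearMap.mulLeft ℚ (mono [a])) LinearMap.id (deltaMon t)

noncomputable def deltaHatB : Option Mon → Fhat ⊗[ℚ] Fhat
  | none => ehat ⊗ₜ ehat
  | some w => TensorProduct.map ι ι (deltaMon w) + ehat ⊗ₜ ι (mono w) + ι (mono w) ⊗ₜ ehat

/-- The coproduct `Δ̂` on `F̂`. -/
noncomputable def deltaHat : Fhat →ₗ[ℚ] Fhat ⊗[ℚ] Fhat :=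
  Finsupp.lsum ℚ fun o => LinearMap.toSpanSingleton ℚ (Fhat ⊗[ℚ] Fhat) (deltaHatB o)

noncomputable def gHatB : Option Mon → Fhat
  | none => ι 1
  | some w => ι (gMon w + mono w * cF)

/-- The map `Ĝ` on `F̂`: `Ĝ e = 1`, `Ĝ u = G u + u c`. -/
noncomputable def gHat : Fhat →ₗ[ℚ] Fhat :=
  Finsupp.lsum ℚ fun o => LinearMap.toSpanSingleton ℚ Fhat (gHatB o)


noncomputable def muB : Option Mon → Option Mon → Fhat
  | none, none => ι (2 : F)
  | none, some w => ι (cF * mono w)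
  | some w, none => ι (mono w * cF)
  | some u, some w => ι (mono u * dF * mono w)

/-- The map `μ : F̂ ⊗ F̂ → F̂` with `μ(e⊗e)=2`, `μ(e⊗v)=cv`, `μ(v⊗e)=vc`, `μ(u⊗v)=udv`. -/
noncomputable def mu : Fhat ⊗[ℚ] Fhat →ₗ[ℚ] Fhat :=
  TensorProduct.lift
    (Finsupp.lsum ℚ fun o => LinearMap.toSpanSingleton ℚ (Fhat →ₗ[ℚ] Fhat)
      (Finsupp.lsum ℚ fun p => LinearMap.toSpanSingleton ℚ Fhat (muB o p)))


section Aux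

noncomputable def mF : F ⊗[ℚ] F →ₗ[ℚ] F :=
  (LinearMap.mul' ℚ F) ∘ₗ (TensorProduct.map (LinearMap.mulRight ℚ dF) LinearMap.id)

lemma mF_tmul (u v : F) : mF (u ⊗ₜ v) = u * dF * v := by
  simp [mF]

lemma ι_mono (w : Mon) : ι (mono w) = Finsupp.single (some w) 1 := by
  rw [ι, mono, MonoidAlgebra.single]
  simp [LinearMap.toSpanSingleton_apply]

lemma mu_single (o p : Option Mon) (r s : ℚ) :
    mu (Finsupp.single o r ⊗ₜ Finsupp.single p s) = r • s • muB o p := by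
  simp [mu, TensorProduct.lift.tmul, Finsupp.lsum_single, LinearMap.toSpanSingleton_apply]

lemma mono_eq (x : FreeMonoid Bool) :
    (MonoidAlgebra.single x (1:ℚ) : F) = mono (FreeMonoid.toList x) := by
  simp [mono]

lemma muι : mu ∘ₗ (TensorProduct.map ι ι) = ι ∘ₗ mF := by
  ext x y
  congr 1
  show mu ((ι (MonoidAlgebra.single x 1)) ⊗ₜ (ι (MonoidAlgebra.single y 1)))
      = ι (mF (MonoidAlgebra.single x 1 ⊗ₜ MonoidAlgebra.single y 1))
  rw [mono_eq x, mono_eq y, ι_mono, ι_mono, mF_tmul, mu_single]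
  simp [muB]

lemma mF_left (u : F) (x : F ⊗[ℚ] F) :
    mF (TensorProduct.map (LinearMap.mulLeft ℚ u) LinearMap.id x) = u * mF x := by
  induction x using TensorProduct.induction_on with
  | zero => simp
  | tmul a b => simp [mF_tmul, mul_assoc]
  | add a b ha hb => simp [ha, hb, mul_add]

lemma mono_cons (a : Bool) (t : Mon) : mono (a :: t) = mono [a] * mono t := by
  simp only [mono, MonoidAlgebra.single_mul_single, one_mul]
  rfl

lemma mono_nil : mono ([] : Mon) = 1 := rfl

lemma mF_delta : ∀ w : Mon,
    mF (deltaMon w) = (2:ℚ) • gMon w + mono w * cF - cF * mono w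
  | [] => by simp [deltaMon, gMon, mono_nil]
  | a :: t => by
    rw [deltaMon, map_add, mF_left, mF_delta t]
    cases a <;>
      · simp only [deltaLetter, map_smul, map_add, TensorProduct.map_tmul,
          LinearMap.mulRight_apply, LinearMap.id_coe, id_eq, mF_tmul,
          gMon, gLetter, one_mul, mul_one, mono_nil, cF, dF]
        rw [mono_cons _ t]
        simp only [two_smul]
        noncomm_ring

end Aux

/-- `2Ĝ = μ ∘ Δ̂` as linear maps `F̂ → F̂`. -/
theorem two_gHat_eq_mu_comp_deltaHat : (2 : ℚ) • gHat = mu ∘ₗ deltaHat := by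
  ext o
  congr 1
  show ((2:ℚ) • gHat) (Finsupp.single o 1) = mu (deltaHat (Finsupp.single o 1))
  have hg : gHat (Finsupp.single o 1) = gHatB o := by
    simp [gHat, Finsupp.lsum_single, LinearMap.toSpanSingleton_apply]
  have hd : deltaHat (Finsupp.single o 1) = deltaHatB o := by
    simp [deltaHat, Finsupp.lsum_single, LinearMap.toSpanSingleton_apply]
  rw [LinearMap.smul_apply, hg, hd]
  cases o with
  | none =>
      show (2:ℚ) • ι 1 = mu (ehat ⊗ₜ ehat)
      rw [ehat, mu_single]
      show (2:ℚ) • ι 1 = (1:ℚ) • (1:ℚ) • ι (2:F)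
      rw [one_smul, one_smul, show (2:F) = 1 + 1 by norm_num, map_add, two_smul]
  | some w =>
      show (2:ℚ) • ι (gMon w + mono w * cF) = mu (TensorProduct.map ι ι (deltaMon w)
        + ehat ⊗ₜ ι (mono w) + ι (mono w) ⊗ₜ ehat)
      have h1 : mu (TensorProduct.map ι ι (deltaMon w)) = ι (mF (deltaMon w)) :=
        LinearMap.congr_fun muι (deltaMon w)
      rw [ι_mono, ehat]
      simp only [map_add, h1, mF_delta, mu_single, one_smul, muB]
      simp only [map_add, map_sub, map_smul, ι_mono]
      module
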